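/- arXiv:2404.08296 — 2 statements merged into one kernel-verified Lean document; each statement's English description precedes it below -/
import Mathlib

section
/- With the angular velocity choice ω₂ = -vex(R_dᵀ R - Rᵀ R_d), the Lyapunov function L₄ = tr(I - R_dᵀ R) along Ṙ = R[ω₂]ₓ satisfies L̇₄ = -‖vex(R_dᵀ R - Rᵀ R_d)‖² ≤ 0. -/
open Matrix

/-- cross-product (skew-symmetric) matrix `[ω]ₓ`. -/
def skew3 (x : Fin 3 → ℝ) : Matrix (Fin 3) (Fin 3) ℝ :=
  !![0, -x 2, x 1; x 2, 0, -x 0; -x 1, x 0, 0]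

/-- inverse of the cross-product map on skew-symmetric matrices. -/
def vex3 (A : Matrix (Fin 3) (Fin 3) ℝ) : Fin 3 → ℝ :=
  ![A 2 1, A 0 2, A 1 0]

attribute [local instance] Matrix.normedAddCommGroup Matrix.normedSpace

lemma trace_mul_skew3 (M : Matrix (Fin 3) (Fin 3) ℝ) (x : Fin 3 → ℝ) :
    (M * skew3 x).trace = -(vex3 (M - Mᵀ) ⬝ᵥ x) := by
  simp [Matrix.trace, Matrix.diag, skew3, vex3, Matrix.mul_apply, Fin.sum_univ_three,
    dotProduct, Matrix.sub_apply, Matrix.transpose_apply]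
  ring

/-- with angular velocity `ω₂ = -vex(R_dᵀ R - Rᵀ R_d)`, the Lyapunov
function `L₄ = tr(I - R_dᵀ R)` along `Ṙ = R [ω₂]ₓ` satisfies
`L̇₄ = -‖vex(R_dᵀ R - Rᵀ R_d)‖² ≤ 0`. -/
theorem attitude_lyapunov_decrease
    (R : ℝ → Matrix (Fin 3) (Fin 3) ℝ)
    (Rd : Matrix (Fin 3) (Fin 3) ℝ)
    (hR : ∀ t, R t ∈ Matrix.specialOrthogonalGroup (Fin 3) ℝ)
    (hRd : Rd ∈ Matrix.specialOrthogonalGroup (Fin 3) ℝ)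
    (ω₂ : ℝ → Fin 3 → ℝ)
    (hω₂ : ∀ t, ω₂ t = -vex3 (Rdᵀ * R t - (R t)ᵀ * Rd))
    (hdyn : ∀ t, HasDerivAt R (R t * skew3 (ω₂ t)) t)
    (L : ℝ → ℝ)
    (hL : ∀ t, L t = (1 - Rdᵀ * R t).trace) :
    ∀ t, HasDerivAt L
        (-(vex3 (Rdᵀ * R t - (R t)ᵀ * Rd) ⬝ᵥ vex3 (Rdᵀ * R t - (R t)ᵀ * Rd))) t ∧
      -(vex3 (Rdᵀ * R t - (R t)ᵀ * Rd) ⬝ᵥ vex3 (Rdᵀ * R t - (R t)ᵀ * Rd)) ≤ 0 := by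
  intro t
  set v : Fin 3 → ℝ := vex3 (Rdᵀ * R t - (R t)ᵀ * Rd) with hv
  constructor
  · set φ : Matrix (Fin 3) (Fin 3) ℝ →L[ℝ] ℝ :=
      LinearMap.toContinuousLinearMap
        ((Matrix.traceLinearMap (Fin 3) ℝ ℝ).comp (LinearMap.mulLeft ℝ Rdᵀ)) with hφ
    have hφapp : ∀ M, φ M = (Rdᵀ * M).trace := fun M => rfl
    have hLeq : L = fun s => (3 : ℝ) - φ (R s) := by
      funext s
      rw [hL s, hφapp]
      rw [Matrix.trace_sub, Matrix.trace_one]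
      norm_num
    have hd : HasDerivAt (fun s => (3 : ℝ) - φ (R s))
        (-(φ (R t * skew3 (ω₂ t)))) t :=
      (φ.hasFDerivAt.comp_hasDerivAt t (hdyn t)).const_sub 3
    rw [hLeq]
    convert hd using 1
    have h1 : φ (R t * skew3 (ω₂ t)) = ((Rdᵀ * R t) * skew3 (ω₂ t)).trace := by
      rw [hφapp, Matrix.mul_assoc]
    rw [h1, trace_mul_skew3, hω₂ t]
    have h2 : (Rdᵀ * R t) - (Rdᵀ * R t)ᵀ = Rdᵀ * R t - (R t)ᵀ * Rd := by
      rw [Matrix.transpose_mul, Matrix.transpose_transpose]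
    rw [h2, ← hv, dotProduct_neg]
    ring
  · have h : 0 ≤ v ⬝ᵥ v :=
      Finset.sum_nonneg fun i _ => mul_self_nonneg (v i)
    linarith
end

section
/- If L : [0,∞) → ℝ is continuously differentiable, L ≥ 0, L̇ ≤ 0, and L(t) includes a barrier term (1/2)log(k_b²/(k_b² - z₁(t)²)) with z₁ continuous and |z₁(0)| < k_b, then |z₁(t)| < k_b for all t ≥ 0. -/
/-- barrier argument. If `L(t) = (1/2)log(k_b²/(k_b² - z₁(t)²)) + M(t)`
with `M ≥ 0` continuous, `z₁` continuous, `L ≥ 0` continuously differentiable with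
`L̇ ≤ 0` (on `t ≥ 0`), and `|z₁(0)| < k_b`, then `|z₁(t)| < k_b` for all `t ≥ 0`. -/
theorem barrier_keeps_state_inside
    (kb : ℝ) (hkb : 0 < kb)
    (z M L L' : ℝ → ℝ)
    (hz : Continuous z)
    (hM : Continuous M)
    (hM0 : ∀ t, 0 ≤ t → 0 ≤ M t)
    (hLdef : ∀ t, L t = (1 / 2) * Real.log (kb ^ 2 / (kb ^ 2 - z t ^ 2)) + M t)
    (hL0 : ∀ t, 0 ≤ t → 0 ≤ L t)
    (hLderiv : ∀ t, HasDerivAt L (L' t) t)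
    (hL'cont : Continuous L')
    (hL'nonpos : ∀ t, 0 ≤ t → L' t ≤ 0)
    (hinit : |z 0| < kb) :
    ∀ t, 0 ≤ t → |z t| < kb := by
  -- L is antitone on [0, ∞)
  have hLanti : AntitoneOn L (Set.Ici (0 : ℝ)) := by
    apply antitoneOn_of_deriv_nonpos (convex_Ici 0)
    · exact fun x _ => (hLderiv x).continuousAt.continuousWithinAt
    · exact fun x _ => (hLderiv x).differentiableAt.differentiableWithinAt
    · intro x hx
      rw [interior_Ici] at hx
      rw [(hLderiv x).deriv]
      exact hL'nonpos x (le_of_lt hx)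
  by_contra hcon
  push_neg at hcon
  obtain ⟨t₀, ht₀, hzt₀⟩ := hcon
  -- the set of "bad" times
  set S : Set ℝ := {t | t ∈ Set.Icc 0 t₀ ∧ kb ≤ |z t|} with hS
  have hSne : S.Nonempty := ⟨t₀, ⟨ht₀, le_refl t₀⟩, hzt₀⟩
  have hSclosed : IsClosed S := by
    have : S = Set.Icc 0 t₀ ∩ {t | kb ≤ |z t|} := by
      ext t; simp [hS, Set.mem_inter_iff, and_comm]
    rw [this]
    exact isClosed_Icc.inter (isClosed_le continuous_const hz.abs)
  have hSbdd : BddBelow S := ⟨0, fun t ht => ht.1.1⟩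
  set s := sInf S with hs
  have hsS : s ∈ S := hSclosed.csInf_mem hSne hSbdd
  have hs0 : 0 ≤ s := hsS.1.1
  have hspos : 0 < s := by
    rcases lt_or_eq_of_le hs0 with h | h
    · exact h
    · exfalso; rw [← h] at hsS; exact absurd hsS.2 (not_le.mpr hinit)
  -- on [0, s), we have |z t| < kb
  have hbefore : ∀ t, t ∈ Set.Ico (0 : ℝ) s → |z t| < kb := by
    intro t ht
    by_contra h
    push_neg at h
    have htS : t ∈ S := ⟨⟨ht.1, le_trans ht.2.le hsS.1.2⟩, h⟩
    exact absurd (csInf_le hSbdd htS) (not_le.mpr ht.2)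
  -- uniform lower bound on the barrier denominator on [0, s)
  set c : ℝ := kb ^ 2 * Real.exp (-(2 * L 0)) with hc
  have hcpos : 0 < c := mul_pos (pow_pos hkb 2) (Real.exp_pos _)
  have hbound : ∀ t, t ∈ Set.Ico (0 : ℝ) s → c ≤ kb ^ 2 - z t ^ 2 := by
    intro t ht
    have hzlt : |z t| < kb := hbefore t ht
    have hzsq : z t ^ 2 < kb ^ 2 := by
      rw [← sq_abs]
      exact pow_lt_pow_left₀ hzlt (abs_nonneg _) two_ne_zero
    have hdpos : 0 < kb ^ 2 - z t ^ 2 := sub_pos.mpr hzsq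
    -- barrier term ≤ L t ≤ L 0
    have hbarrier : (1 / 2) * Real.log (kb ^ 2 / (kb ^ 2 - z t ^ 2)) ≤ L 0 := by
      have h1 : (1 / 2) * Real.log (kb ^ 2 / (kb ^ 2 - z t ^ 2)) ≤ L t := by
        rw [hLdef t]
        linarith [hM0 t ht.1]
      exact le_trans h1 (hLanti (Set.self_mem_Ici) ht.1 ht.1)
    have hlog : Real.log (kb ^ 2 / (kb ^ 2 - z t ^ 2)) ≤ 2 * L 0 := by linarith
    have hratio : kb ^ 2 / (kb ^ 2 - z t ^ 2) ≤ Real.exp (2 * L 0) := by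
      have hq : 0 < kb ^ 2 / (kb ^ 2 - z t ^ 2) := div_pos (pow_pos hkb 2) hdpos
      calc kb ^ 2 / (kb ^ 2 - z t ^ 2)
          = Real.exp (Real.log (kb ^ 2 / (kb ^ 2 - z t ^ 2))) := (Real.exp_log hq).symm
        _ ≤ Real.exp (2 * L 0) := Real.exp_le_exp.mpr hlog
    have : kb ^ 2 ≤ Real.exp (2 * L 0) * (kb ^ 2 - z t ^ 2) :=
      (div_le_iff₀ hdpos).mp hratio
    rw [hc, Real.exp_neg, ← div_eq_mul_inv]
    rw [mul_comm] at this
    exact (div_le_iff₀ (Real.exp_pos _)).mpr this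
  -- take limit t → s⁻ : c ≤ kb² - z s²
  have hglim : Filter.Tendsto (fun t => kb ^ 2 - z t ^ 2) (nhdsWithin s (Set.Iio s))
      (nhds (kb ^ 2 - z s ^ 2)) := by
    have : Continuous (fun t => kb ^ 2 - z t ^ 2) := by continuity
    exact (this.tendsto s).mono_left nhdsWithin_le_nhds
  have hev : ∀ᶠ t in nhdsWithin s (Set.Iio s), c ≤ kb ^ 2 - z t ^ 2 := by
    have hIci : Set.Ici (0 : ℝ) ∈ nhdsWithin s (Set.Iio s) :=
      nhdsWithin_le_nhds (Filter.mem_of_superset (isOpen_Ioi.mem_nhds hspos) Set.Ioi_subset_Ici_self)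
    have hIio : Set.Iio s ∈ nhdsWithin s (Set.Iio s) := self_mem_nhdsWithin
    filter_upwards [hIci, hIio] with t h0 hlt
    exact hbound t ⟨h0, hlt⟩
  have hfinal : c ≤ kb ^ 2 - z s ^ 2 := ge_of_tendsto hglim hev
  -- but |z s| ≥ kb, contradiction
  have : kb ^ 2 ≤ z s ^ 2 := by
    have h := pow_le_pow_left₀ hkb.le hsS.2 2
    rwa [sq_abs] at h
  linarith
end
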